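/- arXiv:1402.3903 — 2 statements merged into one kernel-verified Lean document; each statement's English description precedes it below -/
import Mathlib

section
/- Let 0 < q < 1, let f: ℂ → ℂ be an entire function with Taylor expansion f(x) = Σ_{n≥0} a_n x^n, and define the entire function ψ(ξ) = Σ_{n≥0} a_n q^{n(n−1)/2} ξ^n (the q-Borel transform of f). Then for every λ ∈ ℂ∖{0} and every x ∈ ℂ∖{0} with x ∉ {−λ q^k : k ∈ ℤ}, the bilateral series Σ_{n∈ℤ} ψ(λ q^n)/θ_q(λ q^n / x) converges absolutely and its sum equals f(x). -/
open Complex Filter Topology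

/-- The q-shifted factorial `(a;q)_n`. -/
noncomputable def qPoch (q a : ℂ) (n : ℕ) : ℂ := ∏ k ∈ Finset.range n, (1 - a * q ^ k)

/-- The infinite q-shifted factorial `(a;q)_∞`. -/
noncomputable def qPochInf (q a : ℂ) : ℂ := ∏' k : ℕ, (1 - a * q ^ k)

/-- The Jacobi theta function `θ_q(x) = Σ_{n∈ℤ} q^{n(n-1)/2} x^n`. -/
noncomputable def jTheta (q : ℝ) (x : ℂ) : ℂ := ∑' n : ℤ, (q : ℂ) ^ (n * (n - 1) / 2) * x ^ n

/-- The basic hypergeometric series `₃φ₂(a₁,a₂,a₃;b₁,b₂;q,x)`. -/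
noncomputable def phi32 (q a₁ a₂ a₃ b₁ b₂ x : ℂ) : ℂ :=
  ∑' n : ℕ, (qPoch q a₁ n * qPoch q a₂ n * qPoch q a₃ n) /
    (qPoch q b₁ n * qPoch q b₂ n * qPoch q q n) * x ^ n

/-- The basic hypergeometric series `₂φ₂(a₁,a₂;b₁,b₂;q,x)`. -/
noncomputable def phi22 (q a₁ a₂ b₁ b₂ x : ℂ) : ℂ :=
  ∑' n : ℕ, (qPoch q a₁ n * qPoch q a₂ n) /
    (qPoch q b₁ n * qPoch q b₂ n * qPoch q q n) * (-1) ^ n * q ^ (n * (n - 1) / 2) * x ^ n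

/-!
Put `y = λ/x`. Quasi-periodicity `q^{n(n-1)/2} yⁿ θ_q(qⁿy) = θ_q(y)` turns the `n`-th term into
`θ_q(y)⁻¹ Σ_m q^{(n+m)(n+m-1)/2} y^{n+m} a_m x^m`. This double series converges absolutely, and
the shear `(n, m) ↦ (n + m, m)` makes it the product `θ_q(y) f(x)`. What remains is
`θ_q(y) ≠ 0` for `y ∉ -q^ℤ`, which is read off Jacobi's triple product
`θ_q(y) = (q;q)_∞ (-y;q)_∞ (-q/y;q)_∞`; the latter is the limit `N → ∞` of Gauss's q-binomial
theorem for `∏_{k<2N} (1 + y q^{k-N})`.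
-/

open Finset

lemma two_mul_mul_pred_div_two (n : ℤ) : 2 * (n * (n - 1) / 2) = n * (n - 1) :=
  Int.mul_ediv_cancel' n.even_mul_pred_self.two_dvd

lemma add_mul_pred_div_two (n m : ℤ) :
    (n + m) * (n + m - 1) / 2 = n * (n - 1) / 2 + m * (m - 1) / 2 + n * m := by
  apply mul_left_cancel₀ (two_ne_zero (α := ℤ))
  rw [two_mul_mul_pred_div_two, mul_add, mul_add, two_mul_mul_pred_div_two,
    two_mul_mul_pred_div_two]
  ring

lemma natCast_choose_two (n : ℕ) : ((n.choose 2 : ℕ) : ℤ) = n * ((n : ℤ) - 1) / 2 := by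
  rw [Nat.choose_two_right]
  rcases n with _ | n
  · rfl
  · push_cast [Nat.add_sub_cancel]
    ring_nf

lemma cast_mul_pred_div_two (n : ℤ) : ((n * (n - 1) / 2 : ℤ) : ℂ) = n * (n - 1) / 2 := by
  rw [Int.cast_div n.even_mul_pred_self.two_dvd (by norm_num)]
  push_cast
  ring

section qPochhammer

variable {q : ℂ}

lemma qPoch_succ (q a : ℂ) (n : ℕ) : qPoch q a (n + 1) = qPoch q a n * (1 - a * q ^ n) :=
  prod_range_succ _ _

lemma summable_norm_neg_mul_pow (hq : ‖q‖ < 1) (a : ℂ) :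
    Summable fun k : ℕ => ‖-(a * q ^ k)‖ := by
  simpa [norm_mul, norm_pow] using (summable_geometric_of_lt_one (norm_nonneg _) hq).mul_left ‖a‖

lemma tendsto_qPoch (hq : ‖q‖ < 1) (a : ℂ) :
    Tendsto (qPoch q a) atTop (𝓝 (qPochInf q a)) := by
  have h := multipliable_one_add_of_summable (summable_norm_neg_mul_pow hq a)
  simp_rw [← sub_eq_add_neg] at h
  exact h.tendsto_prod_tprod_nat

lemma qPochInf_ne_zero (hq : ‖q‖ < 1) {a : ℂ} (ha : ∀ k : ℕ, a * q ^ k ≠ 1) :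
    qPochInf q a ≠ 0 := by
  simp_rw [qPochInf, sub_eq_add_neg]
  refine tprod_one_add_ne_zero_of_summable (fun k => ?_) (summable_norm_neg_mul_pow hq a)
  rw [← sub_eq_add_neg, sub_ne_zero]
  exact (ha k).symm

lemma mul_pow_ne_one (hq : ‖q‖ < 1) {a : ℂ} (ha : ‖a‖ < 1) (k : ℕ) : a * q ^ k ≠ 1 := by
  intro h
  have : ‖a * q ^ k‖ < 1 := by
    rw [norm_mul, norm_pow]
    exact mul_lt_one_of_nonneg_of_lt_one_left (norm_nonneg a) ha
      (pow_le_one₀ (norm_nonneg q) hq.le)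
  simp [h] at this

end qPochhammer

section qBinomial

def qBinom {R : Type*} [CommSemiring R] (q : R) : ℕ → ℕ → R
  | _, 0 => 1
  | 0, _ + 1 => 0
  | n + 1, k + 1 => qBinom q n k + q ^ (k + 1) * qBinom q n (k + 1)

variable {R : Type*} [CommSemiring R] (q : R)

@[simp] lemma qBinom_zero_right (n : ℕ) : qBinom q n 0 = 1 := by
  cases n <;> rfl

lemma qBinom_succ_succ (n k : ℕ) :
    qBinom q (n + 1) (k + 1) = qBinom q n k + q ^ (k + 1) * qBinom q n (k + 1) := rfl

lemma qBinom_eq_zero_of_lt {n k : ℕ} (h : n < k) : qBinom q n k = 0 := by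
  induction n generalizing k with
  | zero => obtain ⟨k, rfl⟩ := Nat.exists_eq_add_of_lt h; rfl
  | succ n ih =>
    obtain ⟨k, rfl⟩ := Nat.exists_eq_add_of_lt (Nat.zero_lt_of_lt h)
    rw [zero_add, qBinom_succ_succ, ih (by omega), ih (by omega), mul_zero, add_zero]

@[simp] lemma qBinom_self (n : ℕ) : qBinom q n n = 1 := by
  induction n with
  | zero => rfl
  | succ n ih =>
    rw [qBinom_succ_succ, ih, qBinom_eq_zero_of_lt q n.lt_succ_self, mul_zero, add_zero]

theorem prod_one_add_mul_pow_eq_sum_qBinom (n : ℕ) (z : R) :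
    ∏ k ∈ range n, (1 + z * q ^ k) =
      ∑ j ∈ range (n + 1), qBinom q n j * q ^ j.choose 2 * z ^ j := by
  induction n generalizing z with
  | zero => simp
  | succ n ih =>
    have hshift : ∀ j, q ^ (j + 1).choose 2 = q ^ j.choose 2 * q ^ j := fun j => by
      rw [Nat.choose_succ_succ, Nat.choose_one_right, add_comm, pow_add]
    have hlow : ∑ j ∈ range (n + 1), qBinom q n j * q ^ j.choose 2 * (z * q) ^ j =
        ∑ j ∈ range (n + 1), q ^ (j + 1) * qBinom q n (j + 1) * q ^ (j + 1).choose 2 * z ^ (j + 1)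
          + 1 := by
      rw [sum_range_succ' _ n, sum_range_succ _ n, qBinom_eq_zero_of_lt q n.lt_succ_self]
      simp only [hshift, qBinom_zero_right, mul_zero, zero_mul, add_zero, Nat.choose_zero_succ,
        pow_zero, mul_one]
      congr 1
      exact sum_congr rfl fun j _ => by ring
    have hhigh : ∑ j ∈ range (n + 1), qBinom q n j * q ^ j.choose 2 * (z * q) ^ j * z =
        ∑ j ∈ range (n + 1), qBinom q n j * q ^ (j + 1).choose 2 * z ^ (j + 1) :=
      sum_congr rfl fun j _ => by rw [hshift]; ring
    rw [prod_range_succ', sum_range_succ' _ (n + 1)]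
    rw [prod_congr rfl fun k _ => by rw [pow_succ', ← mul_assoc], ih, qBinom_zero_right]
    simp_rw [qBinom_succ_succ, add_mul, sum_add_distrib, pow_zero, mul_one, mul_add, mul_one,
      sum_mul, hhigh, hlow]
    simp only [Nat.choose_zero_succ, pow_zero, mul_one]
    ring

end qBinomial

lemma qBinom_add_mul_qPoch (q : ℂ) (i j : ℕ) :
    qBinom q (i + j) j * (qPoch q q j * qPoch q q i) = qPoch q q (i + j) := by
  induction i generalizing j with
  | zero => simp [qPoch]
  | succ i ihi =>
    induction j with
    | zero => simp [qPoch]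
    | succ j ihj =>
      have hi := ihi (j + 1)
      rw [show i + (j + 1) = i + 1 + j by omega] at hi
      rw [show i + 1 + (j + 1) = (i + 1 + j) + 1 by omega, qBinom_succ_succ]
      simp only [qPoch_succ] at ihj hi ⊢
      linear_combination (1 - q * q ^ j) * ihj + q ^ (j + 1) * (1 - q * q ^ i) * hi

lemma tendsto_qBinom {q : ℂ} (hq : ‖q‖ < 1) {i j : ℕ → ℕ} (hi : Tendsto i atTop atTop)
    (hj : Tendsto j atTop atTop) :
    Tendsto (fun N => qBinom q (i N + j N) (j N)) atTop (𝓝 (qPochInf q q)⁻¹) := by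
  have hpoch : ∀ n, qPoch q q n ≠ 0 := fun n =>
    prod_ne_zero_iff.mpr fun k _ => sub_ne_zero.mpr (mul_pow_ne_one hq hq k).symm
  have hinf : qPochInf q q ≠ 0 := qPochInf_ne_zero hq (mul_pow_ne_one hq hq)
  have hlim := (tendsto_qPoch hq q).comp
    (tendsto_atTop_mono (fun N => Nat.le_add_right (i N) (j N)) hi) |>.div
    (((tendsto_qPoch hq q).comp hj).mul ((tendsto_qPoch hq q).comp hi)) (mul_ne_zero hinf hinf)
  rw [div_mul_cancel_left₀ hinf] at hlim
  refine hlim.congr fun N => ?_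
  simp only [Pi.div_apply, Function.comp_apply]
  rw [← qBinom_add_mul_qPoch, mul_div_cancel_right₀ _ (mul_ne_zero (hpoch _) (hpoch _))]

section RealParameter

variable {q : ℝ} (hq0 : 0 ≤ q) (hq1 : q < 1)
include hq0 hq1

lemma norm_ofReal_lt_one : ‖(q : ℂ)‖ < 1 := by
  rwa [Complex.norm_real, Real.norm_of_nonneg hq0]

lemma norm_one_sub_mul_pow_le_one (k : ℕ) : ‖1 - (q : ℂ) * q ^ k‖ ≤ 1 := by
  have h0 : 0 ≤ q * q ^ k := by positivity
  have h1 : q * q ^ k ≤ 1 := mul_le_one₀ hq1.le (by positivity) (pow_le_one₀ hq0 hq1.le)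
  rw [show (1 : ℂ) - q * q ^ k = ((1 - q * q ^ k : ℝ) : ℂ) by push_cast; ring, Complex.norm_real,
    Real.norm_of_nonneg (by linarith)]
  linarith

lemma norm_qPoch_le_one (n : ℕ) : ‖qPoch (q : ℂ) q n‖ ≤ 1 := by
  rw [qPoch, norm_prod]
  exact prod_le_one (fun _ _ => norm_nonneg _) fun k _ => norm_one_sub_mul_pow_le_one hq0 hq1 k

lemma norm_qPochInf_le_norm_qPoch (n : ℕ) : ‖qPochInf (q : ℂ) q‖ ≤ ‖qPoch (q : ℂ) q n‖ := by
  refine Antitone.le_of_tendsto (antitone_nat_of_succ_le fun m => ?_)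
    (tendsto_qPoch (norm_ofReal_lt_one hq0 hq1) q).norm n
  rw [qPoch_succ, norm_mul]
  exact mul_le_of_le_one_right (norm_nonneg _) (norm_one_sub_mul_pow_le_one hq0 hq1 m)

lemma norm_qBinom_le (n k : ℕ) : ‖qBinom (q : ℂ) n k‖ ≤ ‖qPochInf (q : ℂ) q‖⁻¹ ^ 2 := by
  rcases lt_or_ge n k with hnk | hkn
  · rw [qBinom_eq_zero_of_lt _ hnk, norm_zero]
    positivity
  obtain ⟨i, rfl⟩ := Nat.exists_eq_add_of_le' hkn
  have hq := norm_ofReal_lt_one hq0 hq1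
  have hc : 0 < ‖qPochInf (q : ℂ) q‖ :=
    norm_pos_iff.mpr (qPochInf_ne_zero hq (mul_pow_ne_one hq hq))
  have hi := norm_qPochInf_le_norm_qPoch hq0 hq1 i
  have hk := norm_qPochInf_le_norm_qPoch hq0 hq1 k
  have hprod := congrArg norm (qBinom_add_mul_qPoch (q : ℂ) i k)
  rw [norm_mul, norm_mul] at hprod
  rw [inv_pow, ← one_div, le_div_iff₀ (by positivity)]
  calc ‖qBinom (q : ℂ) (i + k) k‖ * ‖qPochInf (q : ℂ) q‖ ^ 2
      ≤ ‖qBinom (q : ℂ) (i + k) k‖ * (‖qPoch (q : ℂ) q k‖ * ‖qPoch (q : ℂ) q i‖) := by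
        rw [sq]; gcongr
    _ ≤ 1 := hprod ▸ norm_qPoch_le_one hq0 hq1 (i + k)

end RealParameter

section FiniteTripleProduct

lemma prod_pow_succ_eq_pow_choose (q : ℂ) (N : ℕ) :
    ∏ k ∈ range N, q ^ (k + 1) = q ^ (N + 1).choose 2 := by
  rw [prod_pow_eq_pow_sum, Nat.choose_two_right, ← sum_range_id, sum_range_succ' (fun k => k),
    add_zero]

variable {q y : ℂ} (hq : q ≠ 0) (hy : y ≠ 0)
include hq hy

lemma prod_one_add_mul_inv_pow_eq_qPoch (N : ℕ) :
    ∏ k ∈ range N, (1 + y * (q ^ N)⁻¹ * q ^ k) =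
      y ^ N * (q ^ (N + 1).choose 2)⁻¹ * qPoch q (-q / y) N := by
  have hfactor : ∀ k ∈ range N, 1 + y * (q ^ N)⁻¹ * q ^ (N - 1 - k) =
      y * (q ^ (k + 1))⁻¹ * (1 - -q / y * q ^ k) := fun k hk => by
    have hN : q ^ N = q ^ (N - 1 - k) * q ^ (k + 1) := by
      rw [← pow_add]; congr 1; have := mem_range.mp hk; omega
    rw [hN]
    field_simp
    ring
  rw [← prod_range_reflect, prod_congr rfl hfactor, prod_mul_distrib, prod_mul_distrib,
    prod_const, card_range, prod_inv_distrib, prod_pow_succ_eq_pow_choose, qPoch]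

/-- Gauss's q-binomial theorem at `z = y q^{-N}`. -/
theorem qPoch_neg_mul_qPoch_neg_div_eq_sum (N : ℕ) :
    qPoch q (-y) N * qPoch q (-q / y) N =
      ∑ j ∈ range (2 * N + 1),
        qBinom q (2 * N) j * q ^ (((j : ℤ) - N) * ((j : ℤ) - N - 1) / 2) * y ^ ((j : ℤ) - N) := by
  have hc : y ^ N * (q ^ (N + 1).choose 2)⁻¹ ≠ 0 := by simp [hq, hy]
  have gauss := prod_one_add_mul_pow_eq_sum_qBinom q (2 * N) (y * (q ^ N)⁻¹)
  rw [two_mul, prod_range_add, prod_one_add_mul_inv_pow_eq_qPoch hq hy, ← two_mul] at gauss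
  have hsecond : ∏ k ∈ range N, (1 + y * (q ^ N)⁻¹ * q ^ (N + k)) = qPoch q (-y) N :=
    prod_congr rfl fun k _ => by field_simp; ring
  rw [hsecond] at gauss
  refine mul_left_cancel₀ hc ?_
  rw [mul_sum, ← mul_assoc, mul_right_comm, gauss]
  refine sum_congr rfl fun j _ => ?_
  have hexp : ((j : ℤ) - N) * ((j : ℤ) - N - 1) / 2 =
      ((j.choose 2 : ℕ) : ℤ) - ((N * j : ℕ) : ℤ) + (((N + 1).choose 2 : ℕ) : ℤ) := by
    have h1 := add_mul_pred_div_two ((j : ℤ) - N) N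
    have h2 := add_mul_pred_div_two (N : ℤ) 1
    have h3 := two_mul_mul_pred_div_two (N : ℤ)
    rw [sub_add_cancel] at h1
    push_cast [natCast_choose_two]
    rw [add_sub_cancel_right]
    norm_num at h2
    linarith
  rw [hexp, zpow_add₀ hq, zpow_sub₀ hq, zpow_sub₀ hy]
  simp only [zpow_natCast, mul_pow, inv_pow, ← pow_mul]
  field_simp

end FiniteTripleProduct

section Theta

variable {q : ℝ} {y : ℂ}

/-- With `q = e^{2πiτ}` and `y = q^{1/2} e^{2πiz}`, the terms of `jTheta q y` are those of
`jacobiTheta₂ z τ`. -/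
lemma jTheta_term_eq_jacobiTheta₂_term (hq0 : 0 < q) (hy : y ≠ 0) (n : ℤ) :
    (q : ℂ) ^ (n * (n - 1) / 2) * y ^ n =
      jacobiTheta₂_term n ((Complex.log y - Real.log q / 2) / (2 * Real.pi * I))
        (Real.log q / (2 * Real.pi * I)) := by
  have hq : (q : ℂ) = cexp (Real.log q) := by
    rw [Complex.ofReal_log hq0.le, Complex.exp_log (by exact_mod_cast hq0.ne')]
  conv_lhs => rw [hq, ← Complex.exp_log hy, ← Complex.exp_int_mul, ← Complex.exp_int_mul,
    ← Complex.exp_add, cast_mul_pred_div_two]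
  rw [jacobiTheta₂_term]
  congr 1
  field_simp
  ring

lemma summable_norm_jTheta_term (hq0 : 0 < q) (hq1 : q < 1) (hy : y ≠ 0) :
    Summable fun n : ℤ => ‖(q : ℂ) ^ (n * (n - 1) / 2) * y ^ n‖ := by
  simp_rw [jTheta_term_eq_jacobiTheta₂_term hq0 hy]
  refine ((summable_jacobiTheta₂_term_iff _ _).mpr ?_).norm
  have hτ : (Real.log q / (2 * Real.pi * I) : ℂ) = ((-Real.log q / (2 * Real.pi) : ℝ) : ℂ) * I := by
    push_cast
    field_simp
    rw [I_sq]
    ring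
  rw [hτ, Complex.mul_I_im, Complex.ofReal_re]
  exact div_pos (neg_pos.mpr (Real.log_neg hq0 hq1)) (by positivity)

lemma jTheta_mul_zpow (hq : q ≠ 0) (hy : y ≠ 0) (m : ℤ) :
    (q : ℂ) ^ (m * (m - 1) / 2) * y ^ m * jTheta q ((q : ℂ) ^ m * y) = jTheta q y := by
  have hq' : (q : ℂ) ≠ 0 := Complex.ofReal_ne_zero.mpr hq
  rw [jTheta, jTheta, ← tsum_mul_left]
  conv_rhs => rw [← (Equiv.addRight m).tsum_eq]
  refine tsum_congr fun n => ?_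
  rw [Equiv.coe_addRight, mul_zpow, ← zpow_mul, add_mul_pred_div_two, zpow_add₀ hq',
    zpow_add₀ hq', zpow_add₀ hy, mul_comm m n]
  ring

theorem jTheta_eq_qPochInf_mul (hq0 : 0 < q) (hq1 : q < 1) (hy : y ≠ 0) :
    jTheta q y = qPochInf q q * (qPochInf q (-y) * qPochInf q (-q / y)) := by
  have hq := norm_ofReal_lt_one hq0.le hq1
  have hq' : (q : ℂ) ≠ 0 := Complex.ofReal_ne_zero.mpr hq0.ne'
  have hinf : qPochInf (q : ℂ) q ≠ 0 := qPochInf_ne_zero hq (mul_pow_ne_one hq hq)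
  let t : ℤ → ℂ := fun m => (q : ℂ) ^ (m * (m - 1) / 2) * y ^ m
  let G : ℕ → ℤ → ℂ := fun N m =>
    if -(N : ℤ) ≤ m then qBinom (q : ℂ) (2 * N) (N + m).toNat * t m else 0
  have hG : ∀ N, ∑' m, G N m = qPoch q (-y) N * qPoch q (-q / y) N := fun N => by
    have hsupp : Function.support (G N) ⊆ Set.range fun j : ℕ => (j : ℤ) - N := fun m hm => by
      have : -(N : ℤ) ≤ m := by by_contra h; exact hm (if_neg h)
      exact ⟨(N + m).toNat, show ((N + m).toNat : ℤ) - N = m by omega⟩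
    have hinj : Function.Injective fun j : ℕ => (j : ℤ) - N := fun i j h => by simpa using h
    rw [← hinj.tsum_eq hsupp, qPoch_neg_mul_qPoch_neg_div_eq_sum hq' hy]
    refine (tsum_eq_sum fun j hj => ?_).trans (sum_congr rfl fun j _ => ?_)
    · simp only [G, if_pos (by omega : -(N : ℤ) ≤ j - N)]
      rw [qBinom_eq_zero_of_lt _ (by rw [mem_range] at hj; omega), zero_mul]
    · simp only [G, t, if_pos (by omega : -(N : ℤ) ≤ j - N), add_sub_cancel, Int.toNat_natCast,
        mul_assoc]
  -- Tannery's theorem: the centred coefficients `[2N, N+m]_q` tend to `(q;q)_∞⁻¹` and are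
  -- bounded by `(q;q)_∞⁻²`.
  have hpoint : ∀ m, Tendsto (fun N => G N m) atTop (𝓝 ((qPochInf q q)⁻¹ * t m)) := fun m => by
    have hi : Tendsto (fun N : ℕ => ((N : ℤ) - m).toNat) atTop atTop :=
      tendsto_atTop_atTop.mpr fun b => ⟨b + m.natAbs, fun N hN => by omega⟩
    have hj : Tendsto (fun N : ℕ => ((N : ℤ) + m).toNat) atTop atTop :=
      tendsto_atTop_atTop.mpr fun b => ⟨b + m.natAbs, fun N hN => by omega⟩
    refine ((tendsto_qBinom hq hi hj).mul_const (t m)).congr' ?_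
    filter_upwards [eventually_ge_atTop m.natAbs] with N hN
    simp only [G, if_pos (by omega : -(N : ℤ) ≤ m)]
    congr 2
    omega
  have hbound : ∀ N m, ‖G N m‖ ≤ ‖qPochInf (q : ℂ) q‖⁻¹ ^ 2 * ‖t m‖ := fun N m => by
    simp only [G]
    split_ifs
    · rw [norm_mul]
      exact mul_le_mul_of_nonneg_right (norm_qBinom_le hq0.le hq1 _ _) (norm_nonneg _)
    · rw [norm_zero]
      positivity
  have hlim := tendsto_tsum_of_dominated_convergence
    ((summable_norm_jTheta_term hq0 hq1 hy).mul_left _) hpoint (.of_forall hbound)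
  simp_rw [hG, tsum_mul_left] at hlim
  have hprod := (tendsto_qPoch hq (-y)).mul (tendsto_qPoch hq (-q / y))
  rw [jTheta, ← tendsto_nhds_unique hlim hprod, mul_inv_cancel_left₀ hinf]

theorem jTheta_ne_zero (hq0 : 0 < q) (hq1 : q < 1) (hy : y ≠ 0)
    (h : ∀ k : ℤ, y ≠ -(q : ℂ) ^ k) : jTheta q y ≠ 0 := by
  have hq := norm_ofReal_lt_one hq0.le hq1
  have hq' : (q : ℂ) ≠ 0 := Complex.ofReal_ne_zero.mpr hq0.ne'
  rw [jTheta_eq_qPochInf_mul hq0 hq1 hy]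
  refine mul_ne_zero (qPochInf_ne_zero hq (mul_pow_ne_one hq hq))
    (mul_ne_zero (qPochInf_ne_zero hq fun k hk => h (-k) ?_)
      (qPochInf_ne_zero hq fun k hk => h (k + 1) ?_))
  · rw [zpow_neg, zpow_natCast]
    field_simp
    linear_combination -hk
  · rw [zpow_add₀ hq', zpow_natCast, zpow_one]
    field_simp at hk
    linear_combination -hk

end Theta

section Shear

variable {R : Type*} [NormedRing R] {t : ℤ → R} {c : ℕ → R}

def intNatShear : ℤ × ℕ ≃ ℤ × ℕ where
  toFun p := (p.1 + p.2, p.2)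
  invFun p := (p.1 - p.2, p.2)
  left_inv p := by simp
  right_inv p := by simp

lemma summable_norm_shear_mul (ht : Summable (‖t ·‖)) (hc : Summable (‖c ·‖)) :
    Summable fun p : ℤ × ℕ => ‖t (p.1 + p.2) * c p.2‖ := by
  have h := ht.mul_norm hc
  rwa [← intNatShear.summable_iff] at h

lemma tsum_shear_mul [CompleteSpace R] (ht : Summable (‖t ·‖)) (hc : Summable (‖c ·‖)) :
    ∑' p : ℤ × ℕ, t (p.1 + p.2) * c p.2 = (∑' k, t k) * ∑' m, c m := by
  rw [tsum_mul_tsum_of_summable_norm ht hc]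
  exact intNatShear.tsum_eq fun z => t z.1 * c z.2

end Shear

section qLaplace

noncomputable def qBorel (q : ℝ) (a : ℕ → ℂ) (ξ : ℂ) : ℂ :=
  ∑' n : ℕ, a n * (q : ℂ) ^ (n * (n - 1) / 2) * ξ ^ n

variable {q : ℝ} {a : ℕ → ℂ} {x y : ℂ}

lemma summable_norm_mul_pow_of_forall_summable (h : ∀ z : ℂ, Summable fun n => a n * z ^ n)
    (x : ℂ) : Summable fun n => ‖a n * x ^ n‖ := by
  have hw : ((‖x‖ + 1 : ℝ) : ℂ) ≠ 0 := Complex.ofReal_ne_zero.mpr (by positivity)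
  have hr : ‖x / ((‖x‖ + 1 : ℝ) : ℂ)‖ < 1 := by
    rw [norm_div, Complex.norm_real, Real.norm_of_nonneg (by positivity), div_lt_one (by positivity)]
    linarith
  have hbig : (fun n => a n * ((‖x‖ + 1 : ℝ) : ℂ) ^ n) =O[atTop] fun n => ((n ^ 0 : ℕ) : ℂ) := by
    simpa using (h _).tendsto_atTop_zero.isBigO_one ℂ
  refine (summable_norm_mul_geometric_of_norm_lt_one' hr hbig).congr fun n => ?_
  rw [div_pow, mul_assoc, mul_div_cancel₀ _ (pow_ne_zero _ hw)]

lemma qBorel_mul_jTheta_term (hq : q ≠ 0) (hy : y ≠ 0) (n : ℤ) :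
    qBorel q a (x * y * (q : ℂ) ^ n) * ((q : ℂ) ^ (n * (n - 1) / 2) * y ^ n) =
      ∑' m : ℕ, (q : ℂ) ^ ((n + m) * (n + m - 1) / 2) * y ^ (n + m) * (a m * x ^ m) := by
  have hq' : (q : ℂ) ≠ 0 := Complex.ofReal_ne_zero.mpr hq
  rw [qBorel, ← tsum_mul_right]
  refine tsum_congr fun m => ?_
  rw [← Nat.choose_two_right, ← zpow_natCast (q : ℂ) (m.choose 2), natCast_choose_two,
    add_mul_pred_div_two, zpow_add₀ hq', zpow_add₀ hq', zpow_add₀ hy, mul_pow, mul_pow,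
    ← zpow_natCast ((q : ℂ) ^ n), ← zpow_mul, zpow_natCast]
  ring

lemma qBorel_div_jTheta_zpow_mul (hq : q ≠ 0) (hy : y ≠ 0) (n : ℤ) :
    qBorel q a (x * y * (q : ℂ) ^ n) / jTheta q ((q : ℂ) ^ n * y) =
      (∑' m : ℕ, (q : ℂ) ^ ((n + m) * (n + m - 1) / 2) * y ^ (n + m) * (a m * x ^ m)) /
        jTheta q y := by
  have hc : (q : ℂ) ^ (n * (n - 1) / 2) * y ^ n ≠ 0 :=
    mul_ne_zero (zpow_ne_zero _ (Complex.ofReal_ne_zero.mpr hq)) (zpow_ne_zero _ hy)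
  rw [← jTheta_mul_zpow hq hy n, ← qBorel_mul_jTheta_term hq hy n, mul_comm _ (jTheta _ _),
    mul_div_mul_right _ _ hc]

end qLaplace

/-- for an entire function `f(x) = Σ aₙ xⁿ` with q-Borel transform
`ψ(ξ) = Σ aₙ q^{n(n-1)/2} ξⁿ`, the q-Laplace transform of `ψ` recovers `f`:
the bilateral series `Σ_{n∈ℤ} ψ(λqⁿ)/θ_q(λqⁿ/x)` converges absolutely to `f(x)`
whenever `x ∉ [-λ;q]`. -/
theorem qLaplace_qBorel_eq_self (q : ℝ) (hq0 : 0 < q) (hq1 : q < 1)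
    (f : ℂ → ℂ) (a : ℕ → ℂ) (hf : ∀ z : ℂ, HasSum (fun n : ℕ => a n * z ^ n) (f z))
    (lam : ℂ) (hlam : lam ≠ 0) (x : ℂ) (hx0 : x ≠ 0)
    (hx : ∀ k : ℤ, x ≠ -lam * (q : ℂ) ^ k) :
    let ψ : ℂ → ℂ := fun ξ => ∑' n : ℕ, a n * (q : ℂ) ^ (n * (n - 1) / 2) * ξ ^ n
    Summable (fun n : ℤ => ‖ψ (lam * (q : ℂ) ^ n) / jTheta q (lam * (q : ℂ) ^ n / x)‖) ∧
      ∑' n : ℤ, ψ (lam * (q : ℂ) ^ n) / jTheta q (lam * (q : ℂ) ^ n / x) = f x := by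
  intro ψ
  set y := lam / x with hydef
  have hy : y ≠ 0 := div_ne_zero hlam hx0
  have hxy : x * y = lam := mul_div_cancel₀ lam hx0
  have hθ : jTheta q y ≠ 0 := jTheta_ne_zero hq0 hq1 hy fun k hk => hx (-k) (by
    rw [← hxy, hk, zpow_neg]
    field_simp [zpow_ne_zero k (Complex.ofReal_ne_zero.mpr hq0.ne')])
  have hterm : ∀ n : ℤ, ψ (lam * (q : ℂ) ^ n) / jTheta q (lam * (q : ℂ) ^ n / x) =
      (∑' m : ℕ, (q : ℂ) ^ ((n + m) * (n + m - 1) / 2) * y ^ (n + m) * (a m * x ^ m)) /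
        jTheta q y := fun n => by
    rw [show lam * (q : ℂ) ^ n / x = (q : ℂ) ^ n * y by rw [hydef]; ring, ← hxy]
    exact qBorel_div_jTheta_zpow_mul hq0.ne' hy n
  have htheta := summable_norm_jTheta_term hq0 hq1 hy
  have hcoeff := summable_norm_mul_pow_of_forall_summable (fun z => (hf z).summable) x
  have hsum := summable_norm_shear_mul htheta hcoeff
  refine ⟨?_, ?_⟩
  · simp_rw [hterm, norm_div]
    exact (hsum.prod.div_const _).of_nonneg_of_le (fun n => by positivity) fun n =>
      div_le_div_of_nonneg_right (norm_tsum_le_tsum_norm (hsum.prod_factor n)) (norm_nonneg _)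
  · rw [tsum_congr hterm, tsum_div_const, ← hsum.of_norm.tsum_prod, tsum_shear_mul htheta hcoeff,
      ← jTheta, (hf x).tsum_eq, mul_div_cancel_left₀ _ hθ]
end

section
/- Let α, β ∈ ℂ and let x ∈ ℂ with x ∉ (−∞, 0] (i.e. −π < arg x < π). Then lim_{q→1⁻} θ_q(q^β x)/θ_q(q^α x) = x^{α−β}, where q^α = exp(α log q), q^β = exp(β log q), and x^{α−β} = exp((α−β) Log x) with the principal logarithm. -/
/-!
Put `L = log q`, so `L → 0⁻`.  Then `θ_q(e^w)` is the Jacobi theta function `jacobiTheta₂ z τ`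
at `τ = L / (2πi)`, and the modular transformation `τ ↦ -1/τ` turns it into a Gaussian factor
times `jacobiTheta₂ z' τ'` with `Im τ' = -2π/L → +∞`.  For `w = γ L + Log x` the new argument has
`Im z' = Im γ + arg x / L`, so `|Im z'| ≤ (|arg x| / 2π) Im τ' + |Im γ|` with `|arg x| / 2π < 1/2`.
This makes every term with `n ≠ 0` decay like `exp(-c |n|)` with `c → ∞`, whence
`jacobiTheta₂ z' τ' → 1` by dominated convergence.  In the ratio the modular prefactor cancels and
the Gaussian factors leave `exp((α - β)((α + β - 1) L / 2 + Log x)) → x^(α - β)`.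
-/

open Complex Filter Topology

/-- The complex power `q^α := exp(α log q)` for a real base `q`. -/
noncomputable def qcpow (q : ℝ) (α : ℂ) : ℂ := Complex.exp (α * (Real.log q : ℂ))

open scoped Real

lemma norm_jacobiTheta₂_term_le_exp_neg_mul_abs {z τ : ℂ} {ρ C : ℝ} (hτ : 0 ≤ τ.im)
    (hz : |z.im| ≤ ρ * τ.im + C) (n : ℤ) :
    ‖jacobiTheta₂_term n z τ‖ ≤
      Real.exp (-(|(n : ℝ)| * (π * (1 - 2 * ρ) * τ.im - 2 * π * C))) := by
  rw [norm_jacobiTheta₂_term, Real.exp_le_exp]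
  have habs_le_sq : |(n : ℝ)| ≤ (n : ℝ) ^ 2 := by
    exact_mod_cast sq_abs n ▸ Int.le_self_sq |n|
  have hlin : -(n * z.im) ≤ |(n : ℝ)| * (ρ * τ.im + C) :=
    (neg_le_abs _).trans (abs_mul (n : ℝ) z.im ▸ mul_le_mul_of_nonneg_left hz (abs_nonneg _))
  nlinarith [mul_le_mul_of_nonneg_left habs_le_sq (mul_nonneg Real.pi_pos.le hτ), Real.pi_pos]

lemma summable_exp_neg_abs_int : Summable fun n : ℤ ↦ Real.exp (-|(n : ℝ)|) :=
  .of_nat_of_neg (by simpa using Real.summable_exp_neg_nat)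
    (by simpa using Real.summable_exp_neg_nat)

theorem tendsto_jacobiTheta₂_one {ι : Type*} {l : Filter ι} {z τ : ι → ℂ} {ρ C : ℝ}
    (hρ : ρ < 1 / 2) (hτ : Tendsto (fun i ↦ (τ i).im) l atTop)
    (hz : ∀ᶠ i in l, |(z i).im| ≤ ρ * (τ i).im + C) :
    Tendsto (fun i ↦ jacobiTheta₂ (z i) (τ i)) l (𝓝 1) := by
  set c : ι → ℝ := fun i ↦ π * (1 - 2 * ρ) * (τ i).im - 2 * π * C
  have hc : Tendsto c l atTop :=
    tendsto_atTop_add_const_right _ _ (hτ.const_mul_atTop (by nlinarith [Real.pi_pos]))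
  have hterm : ∀ᶠ i in l, ∀ n : ℤ,
      ‖jacobiTheta₂_term n (z i) (τ i)‖ ≤ Real.exp (-(|(n : ℝ)| * c i)) := by
    filter_upwards [hz, hτ.eventually_ge_atTop 0] with i hzi hτi
    exact norm_jacobiTheta₂_term_le_exp_neg_mul_abs hτi hzi
  have hlim : ∀ n : ℤ, Tendsto (fun i ↦ jacobiTheta₂_term n (z i) (τ i)) l
      (𝓝 (if n = 0 then 1 else 0)) := by
    intro n
    split_ifs with hn
    · simp [hn, jacobiTheta₂_term, tendsto_const_nhds]
    · have hn' : (0 : ℝ) < |(n : ℝ)| := by positivity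
      refine squeeze_zero_norm' (hterm.mono fun i hi ↦ hi n)
        (Real.tendsto_exp_neg_atTop_nhds_zero.comp (hc.const_mul_atTop hn'))
  have hdom : ∀ᶠ i in l, ∀ n : ℤ,
      ‖jacobiTheta₂_term n (z i) (τ i)‖ ≤ Real.exp (-|(n : ℝ)|) := by
    filter_upwards [hterm, hc.eventually_ge_atTop 1] with i hi hci n
    refine (hi n).trans (Real.exp_le_exp.mpr ?_)
    nlinarith [abs_nonneg (n : ℝ)]
  simpa [jacobiTheta₂] using
    tendsto_tsum_of_dominated_convergence summable_exp_neg_abs_int hlim hdom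

lemma jTheta_exp_eq_jacobiTheta₂ {q : ℝ} (hq : 0 < q) (w : ℂ) :
    jTheta q (cexp w) =
      jacobiTheta₂ ((w - Real.log q / 2) / (2 * π * I)) (Real.log q / (2 * π * I)) := by
  refine tsum_congr fun n ↦ ?_
  obtain ⟨k, hk⟩ := Int.even_mul_pred_self n
  have hq_exp : (q : ℂ) = cexp (Real.log q) := by rw [← ofReal_exp, Real.exp_log hq]
  have hk_half : n * (n - 1) / 2 = k := by omega
  have hk_cast : (n : ℂ) * (n - 1) = k + k := by exact_mod_cast hk
  rw [hk_half, hq_exp, ← exp_int_mul, ← exp_int_mul, ← exp_add, jacobiTheta₂_term]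
  congr 1
  field_simp
  linear_combination -(Real.log q : ℂ) * hk_cast

lemma jTheta_exp_eq {q : ℝ} (hq : 0 < q) (hq₁ : q ≠ 1) (w : ℂ) :
    jTheta q (cexp w) =
      1 / (-I * (Real.log q / (2 * π * I))) ^ (1 / 2 : ℂ) *
        cexp (-(w - Real.log q / 2) ^ 2 / (2 * Real.log q)) *
        jacobiTheta₂ ((w - Real.log q / 2) / Real.log q) (-2 * π * I / Real.log q) := by
  have hL : (Real.log q : ℂ) ≠ 0 := ofReal_ne_zero.mpr (Real.log_ne_zero_of_pos_of_ne_one hq hq₁)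
  set L : ℂ := (Real.log q : ℂ)
  have hexponent : -π * I * ((w - L / 2) / (2 * π * I)) ^ 2 / (L / (2 * π * I)) =
      -(w - L / 2) ^ 2 / (2 * L) := by
    field_simp
  have hz : (w - L / 2) / (2 * π * I) / (L / (2 * π * I)) = (w - L / 2) / L := by
    field_simp
  have hτ : -1 / (L / (2 * π * I)) = -2 * π * I / L := by
    field_simp
  rw [jTheta_exp_eq_jacobiTheta₂ hq, jacobiTheta₂_functional_equation, hexponent, hz, hτ]

lemma jTheta_qcpow_mul_div {q : ℝ} (hq : 0 < q) (hq₁ : q ≠ 1) (α β : ℂ) {x : ℂ} (hx : x ≠ 0) :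
    jTheta q (qcpow q β * x) / jTheta q (qcpow q α * x) =
      cexp ((α - β) * ((α + β - 1) * Real.log q / 2 + log x)) *
        (jacobiTheta₂ (β - 1 / 2 + log x / Real.log q) (-2 * π * I / Real.log q) /
          jacobiTheta₂ (α - 1 / 2 + log x / Real.log q) (-2 * π * I / Real.log q)) := by
  have hL : (Real.log q : ℂ) ≠ 0 := ofReal_ne_zero.mpr (Real.log_ne_zero_of_pos_of_ne_one hq hq₁)
  have hprefactor : 1 / (-I * (Real.log q / (2 * π * I))) ^ (1 / 2 : ℂ) ≠ 0 := by
    refine one_div_ne_zero fun h ↦ ?_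
    rw [cpow_eq_zero_iff] at h
    exact mul_ne_zero (neg_ne_zero.mpr I_ne_zero) (div_ne_zero hL (by simp [Real.pi_ne_zero])) h.1
  have hqcpow (γ : ℂ) : qcpow q γ * x = cexp (γ * Real.log q + log x) := by
    rw [qcpow, exp_add, exp_log hx]
  have harg (γ : ℂ) : (γ * Real.log q + log x - Real.log q / 2) / Real.log q =
      γ - 1 / 2 + log x / Real.log q := by
    field_simp
    ring
  rw [hqcpow, hqcpow, jTheta_exp_eq hq hq₁, jTheta_exp_eq hq hq₁, harg, harg,
    mul_assoc _ (cexp _), mul_assoc _ (cexp _), mul_div_mul_left _ _ hprefactor,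
    mul_div_mul_comm, ← exp_sub]
  congr 2
  field_simp
  ring

lemma abs_arg_lt_pi {x : ℂ} (hx : x ∈ slitPlane) : |arg x| < π :=
  abs_lt.mpr ⟨neg_pi_lt_arg x, (arg_le_pi x).lt_of_ne (slitPlane_arg_ne_pi hx)⟩

lemma tendsto_jacobiTheta₂_log_div (γ : ℂ) {x : ℂ} (hx : x ∈ slitPlane) :
    Tendsto (fun L : ℝ ↦ jacobiTheta₂ (γ - 1 / 2 + log x / L) (-2 * π * I / L))
      (𝓝[<] 0) (𝓝 1) := by
  have him_τ (L : ℝ) : (-2 * π * I / L).im = -2 * π * L⁻¹ := by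
    rw [div_ofReal_im]
    simp [div_eq_mul_inv]
  have him_z (L : ℝ) : (γ - 1 / 2 + log x / L).im = γ.im + arg x / L := by
    simp [div_ofReal_im, log_im]
  refine tendsto_jacobiTheta₂_one (ρ := |arg x| / (2 * π)) (C := |γ.im|) ?_ ?_ ?_
  · rw [div_lt_iff₀ (by positivity)]
    linarith [abs_arg_lt_pi hx]
  · simpa only [him_τ] using
      tendsto_inv_nhdsLT_zero.const_mul_atBot_of_neg (by linarith [Real.pi_pos] : -2 * π < 0)
  · filter_upwards [self_mem_nhdsWithin] with L (hL : L < 0)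
    rw [him_z, him_τ]
    calc |γ.im + arg x / L| ≤ |γ.im| + |arg x / L| := abs_add_le _ _
      _ = |arg x| / (2 * π) * (-2 * π * L⁻¹) + |γ.im| := by
        rw [abs_div, abs_of_neg hL]
        field_simp
        ring

/-- for `-π < arg x < π`, `θ_q(q^β x)/θ_q(q^α x) → x^{α-β}` as `q → 1⁻`. -/
theorem jTheta_ratio_tendsto (α β : ℂ) (x : ℂ) (hx : x ∈ Complex.slitPlane) :
    Tendsto (fun q : ℝ => jTheta q (qcpow q β * x) / jTheta q (qcpow q α * x))
      (𝓝[Set.Ioo (0 : ℝ) 1] 1) (𝓝 (x ^ (α - β))) := by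
  have hlog : Tendsto Real.log (𝓝[Set.Ioo 0 1] 1) (𝓝[<] 0) := by
    simpa using (Real.continuousAt_log one_ne_zero).continuousWithinAt.tendsto_nhdsWithin
      fun q (hq : q ∈ Set.Ioo 0 1) ↦ Real.log_neg hq.1 hq.2
  have hexp : Tendsto (fun L : ℝ ↦ cexp ((α - β) * ((α + β - 1) * L / 2 + log x)))
      (𝓝[<] 0) (𝓝 (x ^ (α - β))) := by
    have hcont : Continuous fun L : ℝ ↦ cexp ((α - β) * ((α + β - 1) * L / 2 + log x)) := by
      fun_prop
    simpa [cpow_def_of_ne_zero (slitPlane_ne_zero hx), mul_comm] using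
      (hcont.tendsto 0).mono_left nhdsWithin_le_nhds
  have htheta := (tendsto_jacobiTheta₂_log_div β hx).div
    (tendsto_jacobiTheta₂_log_div α hx) one_ne_zero
  rw [div_one] at htheta
  have hlim := (hexp.mul htheta).comp hlog
  rw [mul_one] at hlim
  refine hlim.congr' ?_
  filter_upwards [self_mem_nhdsWithin] with q hq
  exact (jTheta_qcpow_mul_div hq.1 hq.2.ne α β (slitPlane_ne_zero hx)).symm
end
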